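/- If G is an r-regular graph of order n with r odd, then γ⁰_st(G) ≤ -n/r. -/

import Mathlib

/-!
Every vertex has an odd number `r` of neighbours, each weighted `±1`, so every neighbourhood sum
of an inverse signed total dominating function is odd, hence at most `-1` rather than `0`.
Summing over all vertices counts each `f u` exactly `r` times, so `r · w(f) ≤ -n`.
-/

open SimpleGraph Finset

theorem Int.odd_sum_iff_odd_card {ι : Type*} {s : Finset ι} {f : ι → ℤ}
    (hf : ∀ i ∈ s, Odd (f i)) : Odd (∑ i ∈ s, f i) ↔ Odd #s := by
  induction s using Finset.cons_induction with
  | empty => simp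
  | cons a s ha ih =>
    rw [sum_cons, card_cons, Int.odd_add', Nat.odd_add_one, ih fun i hi ↦ hf i (mem_cons_of_mem hi)]
    simp [Int.not_even_iff_odd.mpr (hf a (mem_cons_self a s)), Nat.not_odd_iff_even]

namespace SimpleGraph

variable {V : Type*} [Fintype V] (G : SimpleGraph V) [DecidableRel G.Adj]

theorem sum_sum_neighborFinset {M : Type*} [AddCommMonoid M] (f : V → M) :
    ∑ v, ∑ u ∈ G.neighborFinset v, f u = ∑ u, G.degree u • f u := by
  rw [sum_comm' (t' := univ) (s' := fun u ↦ G.neighborFinset u) (by simp [adj_comm])]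
  simp [card_neighborFinset_eq_degree]

theorem IsRegularOfDegree.sum_sum_neighborFinset {M : Type*} [AddCommMonoid M] {r : ℕ}
    (hreg : G.IsRegularOfDegree r) (f : V → M) :
    ∑ v, ∑ u ∈ G.neighborFinset v, f u = r • ∑ u, f u := by
  simp [G.sum_sum_neighborFinset, hreg _, smul_sum]

def IsInverseSignedTotalDominating (f : V → ℤ) : Prop :=
  (∀ v, f v = 1 ∨ f v = -1) ∧ ∀ v, ∑ u ∈ G.neighborFinset v, f u ≤ 0

variable {G}

theorem IsInverseSignedTotalDominating.sum_neighborFinset_le_neg_one {f : V → ℤ} {r : ℕ}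
    (hf : G.IsInverseSignedTotalDominating f) (hr : Odd r) (hreg : G.IsRegularOfDegree r)
    (v : V) : ∑ u ∈ G.neighborFinset v, f u ≤ -1 := by
  have hodd : Odd (∑ u ∈ G.neighborFinset v, f u) := by
    rw [Int.odd_sum_iff_odd_card fun u _ ↦ by rcases hf.1 u with h | h <;> simp [h],
      card_neighborFinset_eq_degree, hreg v]
    exact hr
  obtain ⟨k, hk⟩ := hodd
  have := hf.2 v
  omega

theorem IsInverseSignedTotalDominating.mul_sum_le_neg_card {f : V → ℤ} {r : ℕ}
    (hf : G.IsInverseSignedTotalDominating f) (hr : Odd r) (hreg : G.IsRegularOfDegree r) :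
    r * ∑ v, f v ≤ -(Fintype.card V : ℤ) :=
  calc r * ∑ v, f v = ∑ v, ∑ u ∈ G.neighborFinset v, f u := by
        rw [hreg.sum_sum_neighborFinset, nsmul_eq_mul]
    _ ≤ ∑ _v : V, (-1 : ℤ) := sum_le_sum fun v _ ↦ hf.sum_neighborFinset_le_neg_one hr hreg v
    _ = -(Fintype.card V : ℤ) := by simp

end SimpleGraph

theorem istdn_odd_regular_upper_bound_general {V : Type*} [Fintype V]
    (G : SimpleGraph V) [DecidableRel G.Adj] (r : ℕ) (hr : Odd r)
    (hreg : G.IsRegularOfDegree r)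
    (g : ℤ)
    (hg : IsGreatest {w : ℤ | ∃ f : V → ℤ,
        (∀ v, f v = 1 ∨ f v = -1) ∧
        (∀ v : V, ∑ u ∈ G.neighborFinset v, f u ≤ 0) ∧
        w = ∑ v, f v} g) :
    (g : ℚ) ≤ -(Fintype.card V : ℚ) / (r : ℚ) := by
  obtain ⟨f, hsign, hnbr, rfl⟩ := hg.1
  have hbound := IsInverseSignedTotalDominating.mul_sum_le_neg_card ⟨hsign, hnbr⟩ hr hreg
  rw [le_div_iff₀ (by exact_mod_cast hr.pos), mul_comm]
  exact_mod_cast hbound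

/-- If `G` is `r`-regular of order `n` with `r` odd, then `γ⁰_st(G) ≤ -n/r`. -/
theorem istdn_odd_regular_upper_bound {V : Type*} [Fintype V] [DecidableEq V]
    (G : SimpleGraph V) [DecidableRel G.Adj] (r : ℕ) (hr : Odd r)
    (hreg : G.IsRegularOfDegree r)
    (g : ℤ)
    (hg : IsGreatest {w : ℤ | ∃ f : V → ℤ,
        (∀ v, f v = 1 ∨ f v = -1) ∧
        (∀ v : V, ∑ u ∈ G.neighborFinset v, f u ≤ 0) ∧
        w = ∑ v, f v} g) :
    (g : ℚ) ≤ -(Fintype.card V : ℚ) / (r : ℚ) :=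
  istdn_odd_regular_upper_bound_general G r hr hreg g hg
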